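/- Let r ≥ 1 and a be integers with 0 ≤ a ≤ 10, such that 128(a + 1) = (r² + 3)² − 16, and such that there exists an integer m with 8·r·m = 3(r² + 3)² − 288. Then r = 3 and a = 0. -/

import Mathlib

/-! Modulo `r`, the divisibility condition reduces to `r ∣ 261 = 3² · 29`, while `a ≤ 10` bounds
`(r² + 3)²` by `1424 < 38²`, so `r ≤ 5`. This leaves `r ∈ {1, 3}`, and `r = 1` would force
`a = -1`. -/

theorem dvd_261_of_dvd_three_mul_sq_sub {R : Type*} [CommRing R] {r : R}
    (h : r ∣ 3 * (r ^ 2 + 3) ^ 2 - 288) : r ∣ 261 :=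
  (dvd_sub_right (Dvd.intro (3 * r ^ 3 + 18 * r) rfl)).mp (by convert h using 1; ring)

theorem le_five_of_sq_add_three_sq_le {r : ℤ} (h : (r ^ 2 + 3) ^ 2 ≤ 1424) : r ≤ 5 := by
  by_contra! hr
  have : 36 ≤ r ^ 2 := by nlinarith
  nlinarith

/-- If integers `r ≥ 1` and `0 ≤ a ≤ 10` satisfy `128(a+1) = (r²+3)² - 16` and
`8·r·m = 3(r²+3)² - 288` for some integer `m`, then `r = 3` and `a = 0`. -/
theorem cubic_fourfold_index_determination (r a : ℤ)
    (hr : 1 ≤ r) (ha0 : 0 ≤ a) (ha10 : a ≤ 10)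
    (h : 128 * (a + 1) = (r ^ 2 + 3) ^ 2 - 16)
    (hdiv : ∃ m : ℤ, 8 * r * m = 3 * (r ^ 2 + 3) ^ 2 - 288) :
    r = 3 ∧ a = 0 := by
  obtain ⟨m, hm⟩ := hdiv
  have hr261 : r ∣ 261 :=
    dvd_261_of_dvd_three_mul_sq_sub ⟨8 * m, by rw [← hm]; ring⟩
  have hr5 : r ≤ 5 := le_five_of_sq_add_three_sq_le (by linarith)
  interval_cases r <;> omega
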